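/- arXiv:1103.0269 — 5 statements merged into one kernel-verified Lean document; each statement's English description precedes it below -/
import Mathlib

section
/- The coagulation operator is 1-Lipschitz with respect to d: for all distinguished partitions π, π′, ρ, ρ′ of ℤ₊, d(coag(π,π′), coag(ρ,ρ′)) ≤ max(d(π,ρ), d(π′,ρ′)). In particular coag : P⁰_∞ × P⁰_∞ → P⁰_∞ is Lipschitz-continuous. -/
/-- `b : ℕ → Set ℕ` is (the block function of) a distinguished partition of ℤ₊ = ℕ:
the blocks are pairwise disjoint, cover ℕ, and are indexed in increasing order of their
least element (empty blocks being assigned to the remaining indices, after all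
nonempty ones). -/
def IsDistPartition (b : ℕ → Set ℕ) : Prop :=
  (∀ i j, i ≠ j → Disjoint (b i) (b j)) ∧
  (∀ k, ∃ i, k ∈ b i) ∧
  (∀ i j, i < j → (b j).Nonempty → (b i).Nonempty ∧ sInf (b i) < sInf (b j))

/-- The coagulation `coag(π, π′)`: its `i`-th block is `⋃_{j ∈ π′_i} π_j`. -/
def coag (b b' : ℕ → Set ℕ) : ℕ → Set ℕ := fun i => ⋃ j ∈ b' i, b j

open scoped Classical

/-- The distance `d(π,π′) = (1 + max{n ≥ 0 : π_{|[n]} = π′_{|[n]}})⁻¹` on `P⁰_∞`,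
with `d(π,π′) = 0` if `π = π′`, written on block functions.  The restriction
`π_{|[n]}` is encoded by the family of blocks `π_i ∩ [n]`. -/
noncomputable def pDist (b c : ℕ → Set ℕ) : ℝ :=
  if b = c then 0
  else (1 + ((sSup {n : ℕ | ∀ i, b i ∩ Set.Iic n = c i ∩ Set.Iic n} : ℕ) : ℝ))⁻¹

lemma le_sInf_blk {b : ℕ → Set ℕ} (hb : IsDistPartition b) :
    ∀ j, (b j).Nonempty → j ≤ sInf (b j) := by
  intro j
  induction j with
  | zero => intro _; exact Nat.zero_le _
  | succ j ih =>
    intro h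
    obtain ⟨h1, h2⟩ := hb.2.2 j (j+1) (Nat.lt_succ_self j) h
    have := ih h1
    omega

lemma idx_le_mem {b : ℕ → Set ℕ} (hb : IsDistPartition b) {j k : ℕ} (h : k ∈ b j) :
    j ≤ k :=
  (le_sInf_blk hb j ⟨k, h⟩).trans (Nat.sInf_le h)

lemma zero_mem_blk {b : ℕ → Set ℕ} (hb : IsDistPartition b) : 0 ∈ b 0 := by
  obtain ⟨i, hi⟩ := hb.2.1 0
  have := idx_le_mem hb hi
  interval_cases i
  exact hi

lemma zero_mem_S {b c : ℕ → Set ℕ} (hb : IsDistPartition b) (hc : IsDistPartition c) :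
    ∀ i, b i ∩ Set.Iic 0 = c i ∩ Set.Iic 0 := by
  intro i
  ext k
  simp only [Set.mem_inter_iff, Set.mem_Iic, Nat.le_zero]
  constructor
  · rintro ⟨hk, rfl⟩
    have := idx_le_mem hb hk
    interval_cases i
    exact ⟨zero_mem_blk hc, rfl⟩
  · rintro ⟨hk, rfl⟩
    have := idx_le_mem hc hk
    interval_cases i
    exact ⟨zero_mem_blk hb, rfl⟩

lemma S_down {b c : ℕ → Set ℕ} {n m : ℕ} (hmn : m ≤ n)
    (h : ∀ i, b i ∩ Set.Iic n = c i ∩ Set.Iic n) :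
    ∀ i, b i ∩ Set.Iic m = c i ∩ Set.Iic m := by
  intro i
  ext k
  simp only [Set.mem_inter_iff, Set.mem_Iic]
  have := Set.ext_iff.mp (h i) k
  simp only [Set.mem_inter_iff, Set.mem_Iic] at this
  constructor
  · rintro ⟨hk, hkm⟩; exact ⟨(this.mp ⟨hk, hkm.trans hmn⟩).1, hkm⟩
  · rintro ⟨hk, hkm⟩; exact ⟨(this.mpr ⟨hk, hkm.trans hmn⟩).1, hkm⟩

lemma S_bdd {b c : ℕ → Set ℕ} (h : b ≠ c) :
    BddAbove {n : ℕ | ∀ i, b i ∩ Set.Iic n = c i ∩ Set.Iic n} := by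
  have : ∃ i, b i ≠ c i := by
    by_contra hcon
    push_neg at hcon
    exact h (funext hcon)
  obtain ⟨i, hi⟩ := this
  have : ∃ k, (k ∈ b i) ≠ (k ∈ c i) := by
    by_contra hcon
    push_neg at hcon
    exact hi (Set.ext fun k => by rw [hcon k])
  obtain ⟨k, hk⟩ := this
  refine ⟨k, fun n hn => ?_⟩
  by_contra hnk
  push_neg at hnk
  have := Set.ext_iff.mp (hn i) k
  simp only [Set.mem_inter_iff, Set.mem_Iic] at this
  have hkn : k ≤ n := hnk.le
  exact hk (by
    apply propext
    constructor
    · intro h'; exact (this.mp ⟨h', hkn⟩).1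
    · intro h'; exact (this.mpr ⟨h', hkn⟩).1)

lemma coag_S {b b' c c' : ℕ → Set ℕ} (hb : IsDistPartition b) (hc : IsDistPartition c)
    {n : ℕ} (hS : ∀ i, b i ∩ Set.Iic n = c i ∩ Set.Iic n)
    (hS' : ∀ i, b' i ∩ Set.Iic n = c' i ∩ Set.Iic n) :
    ∀ i, coag b b' i ∩ Set.Iic n = coag c c' i ∩ Set.Iic n := by
  intro i
  ext k
  simp only [coag, Set.mem_inter_iff, Set.mem_iUnion, Set.mem_Iic, exists_prop]
  constructor
  · rintro ⟨⟨j, hj, hk⟩, hkn⟩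
    have hjk : j ≤ k := idx_le_mem hb hk
    have hjc : j ∈ c' i := by
      have := Set.ext_iff.mp (hS' i) j
      simp only [Set.mem_inter_iff, Set.mem_Iic] at this
      exact (this.mp ⟨hj, hjk.trans hkn⟩).1
    have hkc : k ∈ c j := by
      have := Set.ext_iff.mp (hS j) k
      simp only [Set.mem_inter_iff, Set.mem_Iic] at this
      exact (this.mp ⟨hk, hkn⟩).1
    exact ⟨⟨j, hjc, hkc⟩, hkn⟩
  · rintro ⟨⟨j, hj, hk⟩, hkn⟩
    have hjk : j ≤ k := idx_le_mem hc hk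
    have hjb : j ∈ b' i := by
      have := Set.ext_iff.mp (hS' i) j
      simp only [Set.mem_inter_iff, Set.mem_Iic] at this
      exact (this.mpr ⟨hj, hjk.trans hkn⟩).1
    have hkb : k ∈ b j := by
      have := Set.ext_iff.mp (hS j) k
      simp only [Set.mem_inter_iff, Set.mem_Iic] at this
      exact (this.mpr ⟨hk, hkn⟩).1
    exact ⟨⟨j, hjb, hkb⟩, hkn⟩

lemma pDist_nonneg (b c : ℕ → Set ℕ) : 0 ≤ pDist b c := by
  unfold pDist
  split
  · exact le_refl 0
  · positivity

/-- The coagulation operator is 1-Lipschitz with respect to `d`: for all distinguished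
partitions `π, π′, ρ, ρ′` of ℤ₊,
`d(coag(π,π′), coag(ρ,ρ′)) ≤ max(d(π,ρ), d(π′,ρ′))`.
In particular `coag : P⁰_∞ × P⁰_∞ → P⁰_∞` is Lipschitz-continuous. -/
theorem coag_lipschitz (b b' c c' : ℕ → Set ℕ)
    (hb : IsDistPartition b) (hb' : IsDistPartition b')
    (hc : IsDistPartition c) (hc' : IsDistPartition c') :
    pDist (coag b b') (coag c c') ≤ max (pDist b c) (pDist b' c') := by
  by_cases hcc : coag b b' = coag c c'
  · rw [pDist, if_pos hcc]
    exact le_max_of_le_left (pDist_nonneg b c)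
  -- notation
  set S : Set ℕ := {n : ℕ | ∀ i, b i ∩ Set.Iic n = c i ∩ Set.Iic n} with hSdef
  set S' : Set ℕ := {n : ℕ | ∀ i, b' i ∩ Set.Iic n = c' i ∩ Set.Iic n} with hS'def
  set T : Set ℕ :=
    {n : ℕ | ∀ i, coag b b' i ∩ Set.Iic n = coag c c' i ∩ Set.Iic n} with hTdef
  have hTbdd : BddAbove T := S_bdd hcc
  have key : ∀ n, n ∈ S → n ∈ S' → ((1 + ((sSup T : ℕ) : ℝ))⁻¹ ≤ (1 + (n : ℝ))⁻¹) := by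
    intro n hn hn'
    have hnT : n ∈ T := coag_S hb hc hn hn'
    have : n ≤ sSup T := le_csSup hTbdd hnT
    apply inv_anti₀
    · positivity
    · have : (n : ℝ) ≤ ((sSup T : ℕ) : ℝ) := Nat.cast_le.mpr this
      linarith
  rw [pDist, if_neg hcc]
  by_cases hbc : b = c
  · -- then b' ≠ c'
    have hbc' : b' ≠ c' := by
      rintro rfl
      exact hcc (by rw [hbc])
    rw [pDist, pDist, if_pos hbc, if_neg hbc']
    have hS'ne : S'.Nonempty := ⟨0, zero_mem_S hb' hc'⟩
    have hS'bdd : BddAbove S' := S_bdd hbc'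
    have hmem : sSup S' ∈ S' := Nat.sSup_mem hS'ne hS'bdd
    have hSall : sSup S' ∈ S := fun i => by rw [hbc]
    exact le_max_of_le_right (key _ hSall hmem)
  by_cases hbc' : b' = c'
  · rw [pDist, pDist, if_neg hbc, if_pos hbc']
    have hSne : S.Nonempty := ⟨0, zero_mem_S hb hc⟩
    have hSbdd : BddAbove S := S_bdd hbc
    have hmem : sSup S ∈ S := Nat.sSup_mem hSne hSbdd
    have hS'all : sSup S ∈ S' := fun i => by rw [hbc']
    exact le_max_of_le_left (key _ hmem hS'all)
  · rw [pDist, pDist, if_neg hbc, if_neg hbc']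
    have hSne : S.Nonempty := ⟨0, zero_mem_S hb hc⟩
    have hS'ne : S'.Nonempty := ⟨0, zero_mem_S hb' hc'⟩
    have hSmem : sSup S ∈ S := Nat.sSup_mem hSne (S_bdd hbc)
    have hS'mem : sSup S' ∈ S' := Nat.sSup_mem hS'ne (S_bdd hbc')
    rcases le_total (sSup S) (sSup S') with hle | hle
    · have hmS' : sSup S ∈ S' := S_down hle hS'mem
      exact le_max_of_le_left (key _ hSmem hmS')
    · have hmS : sSup S' ∈ S := S_down hle hSmem
      exact le_max_of_le_right (key _ hmS hS'mem)
end

section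
/- Let ρ be a probability measure on [0,1], let (U_i)_{i≥1} be i.i.d. random variables with law ρ, set U₀ := 0, and let π be a (deterministic) distinguished partition of ℤ₊. Then for every n ≥ 1, all bounded measurable functions f₁,…,f_n on [0,1], and every permutation σ of ℤ₊ with finite support and σ(0) = 0: E[∏_{i=1}^n f_i(U_{α_π(σ(i))})] = E[∏_{i=1}^n f_i(U_{α_{σπ}(i)})]. -/
/-!
Since `σπ` is defined by pulling the same-block relation of `π` back along `σ`, the map
`i ↦ α_π(σ i)` factors as `g ∘ α_{σπ}` with `g` injective on block indices, and `g 0 = 0`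
because `σ 0 = 0`. Hence both sides are expectations of one functional of the finite families
`(U_{g j})_j` and `(U_j)_j`, `j` ranging over the blocks of `σπ` met by `1, …, n`. Both
families are independent with the same marginals (`g` maps positive indices to positive ones,
where all laws are `ρ`), so they have the same joint law.
-/

open MeasureTheory

/-- `α_π(k)`: the index of the block of `π` containing `k`. -/
noncomputable def blockIndex (b : ℕ → Set ℕ) (k : ℕ) : ℕ := sInf {i | k ∈ b i}

namespace IsDistPartition

variable {b : ℕ → Set ℕ}

lemma mem_blockIndex (hb : IsDistPartition b) (i : ℕ) : i ∈ b (blockIndex b i) :=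
  Nat.sInf_mem (hb.2.1 i)

lemma blockIndex_eq (hb : IsDistPartition b) {i k : ℕ} (h : i ∈ b k) : blockIndex b i = k := by
  by_contra hne
  exact Set.disjoint_left.mp (hb.1 _ _ hne) (hb.mem_blockIndex i) h

lemma zero_mem (hb : IsDistPartition b) : 0 ∈ b 0 := by
  obtain ⟨k, hk⟩ := hb.2.1 0
  rcases Nat.eq_zero_or_pos k with rfl | hk_pos
  · exact hk
  · have := (hb.2.2 0 k hk_pos ⟨0, hk⟩).2
    have := Nat.sInf_le hk
    omega

lemma blockIndex_zero (hb : IsDistPartition b) : blockIndex b 0 = 0 :=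
  hb.blockIndex_eq hb.zero_mem

lemma exists_mem_and_mem_iff (hb : IsDistPartition b) (i j : ℕ) :
    (∃ k, i ∈ b k ∧ j ∈ b k) ↔ blockIndex b i = blockIndex b j :=
  ⟨fun ⟨_, hi, hj⟩ => (hb.blockIndex_eq hi).trans (hb.blockIndex_eq hj).symm,
    fun h => ⟨_, hb.mem_blockIndex i, h ▸ hb.mem_blockIndex j⟩⟩

end IsDistPartition

lemma Function.FactorsThrough.injOn_extend {α β γ : Type*} {f : α → β} {g : α → γ}
    (hgf : g.FactorsThrough f) (hfg : f.FactorsThrough g) (e' : β → γ) :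
    Set.InjOn (Function.extend f g e') (Set.range f) := by
  rintro _ ⟨a, rfl⟩ _ ⟨a', rfl⟩ h
  rw [hgf.extend_apply, hgf.extend_apply] at h
  exact hfg h

namespace ProbabilityTheory

variable {Ω β : Type*} [MeasurableSpace Ω] [MeasurableSpace β] {P : Measure Ω}

lemma iIndepFun.identDistrib_pi {ι : Type*} [Fintype ι] {X Y : ι → Ω → β}
    (hX : iIndepFun X P) (hY : iIndepFun Y P) (hXm : ∀ i, AEMeasurable (X i) P)
    (hYm : ∀ i, AEMeasurable (Y i) P) (hlaw : ∀ i, P.map (X i) = P.map (Y i)) :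
    IdentDistrib (fun ω i => X i ω) (fun ω i => Y i ω) P P where
  aemeasurable_fst := aemeasurable_pi_lambda _ hXm
  aemeasurable_snd := aemeasurable_pi_lambda _ hYm
  map_eq := by
    rw [hX.map_fun_eq_pi_map hXm, hY.map_fun_eq_pi_map hYm]
    simp_rw [hlaw]

lemma iIndepFun.integral_prod_comp_eq_of_injOn {ι ι' : Type*} [DecidableEq ι']
    {U : ι' → Ω → β} (hU : iIndepFun U P) (hUm : ∀ j, Measurable (U j))
    {f : ι → β → ℝ} (hf : ∀ i, Measurable (f i)) (s : Finset ι) (κ : ι → ι')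
    {g : ι' → ι'} (hg : Set.InjOn g (s.image κ))
    (hlaw : ∀ j ∈ s.image κ, P.map (U (g j)) = P.map (U j)) :
    ∫ ω, ∏ i ∈ s, f i (U (g (κ i)) ω) ∂P = ∫ ω, ∏ i ∈ s, f i (U (κ i) ω) ∂P := by
  set S := s.image κ
  have hκS : ∀ i ∈ s, κ i ∈ S := fun i hi => Finset.mem_image_of_mem κ hi
  have hident :
      IdentDistrib (fun ω (j : S) => U (g j) ω) (fun ω (j : S) => U j ω) P P :=
    iIndepFun.identDistrib_pi (hU.precomp fun j j' h => Subtype.ext (hg j.2 j'.2 h))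
      (hU.precomp Subtype.val_injective) (fun _ => (hUm _).aemeasurable)
      (fun _ => (hUm _).aemeasurable) (fun j => hlaw j j.2)
  let F : (S → β) → ℝ := fun x => ∏ i ∈ s.attach, f i (x ⟨κ i, hκS i i.2⟩)
  have hF : Measurable F :=
    Finset.measurable_prod _ fun i _ => (hf i).comp (measurable_pi_apply _)
  convert (hident.comp hF).integral_eq using 3 <;> exact (Finset.prod_attach s _).symm

end ProbabilityTheory

lemma map_comp_eq_map_of_injOn {Ω β : Type*} [MeasurableSpace Ω] [MeasurableSpace β]
    {P : Measure Ω} {U : ℕ → Ω → β} {ρ : Measure β} (hlaw : ∀ i, 1 ≤ i → P.map (U i) = ρ)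
    {g : ℕ → ℕ} {T : Set ℕ} (hg : Set.InjOn g T) (h0 : 0 ∈ T) (hg0 : g 0 = 0) {j : ℕ}
    (hj : j ∈ T) : P.map (U (g j)) = P.map (U j) := by
  rcases Nat.eq_zero_or_pos j with rfl | hj_pos
  · rw [hg0]
  · have hgj : g j ≠ 0 := fun h => hj_pos.ne' (hg hj h0 (h.trans hg0.symm))
    rw [hlaw _ (Nat.one_le_iff_ne_zero.2 hgj), hlaw j hj_pos]

theorem expectation_product_perm_general
    {Ω : Type*} [MeasurableSpace Ω] (P : Measure Ω)
    (ρ : Measure ℝ)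
    (U : ℕ → Ω → ℝ) (hUmeas : ∀ i, Measurable (U i))
    (hUindep : ProbabilityTheory.iIndepFun U P)
    (hUlaw : ∀ i, 1 ≤ i → Measure.map (U i) P = ρ)
    (b : ℕ → Set ℕ) (hb : IsDistPartition b)
    (σ : Equiv.Perm ℕ) (hσ0 : σ 0 = 0)
    (c : ℕ → Set ℕ) (hc : IsDistPartition c)
    (hcσ : ∀ i j, (∃ k, i ∈ c k ∧ j ∈ c k) ↔ (∃ k, σ i ∈ b k ∧ σ j ∈ b k))
    (n : ℕ)
    (f : ℕ → ℝ → ℝ) (hfmeas : ∀ i, Measurable (f i)) :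
    ∫ ω, ∏ i ∈ Finset.Icc 1 n, f i (U (blockIndex b (σ i)) ω) ∂P
      = ∫ ω, ∏ i ∈ Finset.Icc 1 n, f i (U (blockIndex c i) ω) ∂P := by
  have hsame :
      ∀ i j, blockIndex c i = blockIndex c j ↔ blockIndex b (σ i) = blockIndex b (σ j) :=
    fun i j => by rw [← hb.exists_mem_and_mem_iff, ← hc.exists_mem_and_mem_iff, hcσ]
  have hfac : (blockIndex b ∘ σ).FactorsThrough (blockIndex c) := fun i j => (hsame i j).1
  set g := Function.extend (blockIndex c) (blockIndex b ∘ σ) id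
  have hg : ∀ i, g (blockIndex c i) = blockIndex b (σ i) := hfac.extend_apply id
  have hg_inj : Set.InjOn g (Set.range (blockIndex c)) :=
    hfac.injOn_extend (fun i j => (hsame i j).2) id
  have hg0 : g 0 = 0 := by simpa [hc.blockIndex_zero, hσ0, hb.blockIndex_zero] using hg 0
  simp_rw [← hg]
  refine hUindep.integral_prod_comp_eq_of_injOn hUmeas hfmeas _ _ (hg_inj.mono ?_)
    fun j hj => ?_
  · rw [Finset.coe_image]
    exact Set.image_subset_range _ _
  · obtain ⟨i, -, rfl⟩ := Finset.mem_image.mp hj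
    exact map_comp_eq_map_of_injOn hUlaw hg_inj ⟨0, hc.blockIndex_zero⟩ hg0 ⟨i, rfl⟩

/-- Let `ρ` be a probability measure on `[0,1]`, `(U_i)_{i≥1}` i.i.d. with law `ρ`,
`U₀ := 0`, and `π` a deterministic distinguished partition of ℤ₊.  Then for every
`n ≥ 1`, all bounded measurable `f₁,…,f_n` on `[0,1]`, and every permutation `σ` of ℤ₊
with finite support and `σ(0) = 0`:
`E[∏_{i=1}^n f_i(U_{α_π(σ(i))})] = E[∏_{i=1}^n f_i(U_{α_{σπ}(i)})]`,
where `σπ` is the distinguished partition in which `i` and `j` belong to the same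
block if and only if `σ(i)` and `σ(j)` belong to the same block of `π` (here encoded
by quantifying over any distinguished partition `c` with this same-block property). -/
theorem expectation_product_perm
    {Ω : Type*} [MeasurableSpace Ω] (P : Measure Ω) [IsProbabilityMeasure P]
    (ρ : Measure ℝ) [IsProbabilityMeasure ρ] (hρ : ρ (Set.Icc 0 1) = 1)
    (U : ℕ → Ω → ℝ) (hUmeas : ∀ i, Measurable (U i))
    (hUrange : ∀ i ω, U i ω ∈ Set.Icc (0 : ℝ) 1)
    (hU0 : ∀ ω, U 0 ω = 0)
    (hUindep : ProbabilityTheory.iIndepFun U P)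
    (hUlaw : ∀ i, 1 ≤ i → Measure.map (U i) P = ρ)
    (b : ℕ → Set ℕ) (hb : IsDistPartition b)
    (σ : Equiv.Perm ℕ) (hσfin : {x | σ x ≠ x}.Finite) (hσ0 : σ 0 = 0)
    (c : ℕ → Set ℕ) (hc : IsDistPartition c)
    (hcσ : ∀ i j, (∃ k, i ∈ c k ∧ j ∈ c k) ↔ (∃ k, σ i ∈ b k ∧ σ j ∈ b k))
    (n : ℕ) (hn : 1 ≤ n)
    (f : ℕ → ℝ → ℝ) (hfmeas : ∀ i, Measurable (f i))
    (hfbdd : ∀ i, ∃ C, ∀ x, |f i x| ≤ C) :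
    ∫ ω, ∏ i ∈ Finset.Icc 1 n, f i (U (blockIndex b (σ i)) ω) ∂P
      = ∫ ω, ∏ i ∈ Finset.Icc 1 n, f i (U (blockIndex c i) ω) ∂P :=
  expectation_product_perm_general P ρ U hUmeas hUindep hUlaw b hb σ hσ0 c hc hcσ n f hfmeas
end

section
/- Let (U_i)_{i≥1} be an exchangeable sequence of [0,1]-valued random variables, set U₀ := 0, and let Π be an exchangeable random distinguished partition of ℤ₊ independent of (U_i)_{i≥1}. Then the sequence (U_{α_Π(k)})_{k≥1} is exchangeable: for every permutation τ of {1,2,…} with finite support, (U_{α_Π(τ(k))})_{k≥1} has the same law as (U_{α_Π(k)})_{k≥1}. -/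
open MeasureTheory

/-- `A : ℕ → ℕ` is the index map `α_π` of some distinguished partition `π` of ℤ₊. -/
def IsDistIndexMap (A : ℕ → ℕ) : Prop :=
  ∃ b : ℕ → Set ℕ, IsDistPartition b ∧ ∀ k, A k = blockIndex b k

/-! Given `Π`, the sequence `(U_{α_Π(τ k)})_k` reindexes `(U_i)` along `α_Π ∘ τ`, whose level
sets form the partition `τΠ`. These labels differ from the canonical labels `α_{τΠ}` of `τΠ` by a
finitely supported permutation `ρ` of ℤ₊ fixing `0` (the two labellings agree on every block
starting beyond the support of `τ`), and exchangeability of `U`, independent of `Π`, absorbs `ρ`.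
Hence `(U_{α_Π(τ k)})_k` has the law of `(U_{α_{τΠ}(k)})_k`, which is that of `(U_{α_Π(k)})_k`
because `τΠ` has the law of `Π` and is independent of `U` as well. -/

open Finset ProbabilityTheory

section CanonicalIndex

variable {α : Type*} [DecidableEq α]

def firstOcc (c : ℕ → α) (k : ℕ) : ℕ :=
  Nat.find (⟨k, rfl⟩ : ∃ j, c j = c k)

/-- The index map of the distinguished partition of `ℕ` into the level sets of `c`: the block
of `k` gets as index the number of distinct values of `c` seen before that block starts. -/
def canonIndex (c : ℕ → α) (k : ℕ) : ℕ :=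
  #((range (firstOcc c k)).image c)

variable {c : ℕ → α} {i j k : ℕ}

theorem firstOcc_spec (c : ℕ → α) (k : ℕ) : c (firstOcc c k) = c k :=
  Nat.find_spec (⟨k, rfl⟩ : ∃ j, c j = c k)

theorem firstOcc_le (c : ℕ → α) (k : ℕ) : firstOcc c k ≤ k :=
  Nat.find_le rfl

theorem ne_of_lt_firstOcc (h : j < firstOcc c k) : c j ≠ c k :=
  Nat.find_min (⟨k, rfl⟩ : ∃ j, c j = c k) h

theorem firstOcc_eq_of (hj : c j = c k) (hmin : ∀ i < j, c i ≠ c k) : firstOcc c k = j :=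
  (Nat.find_eq_iff _).2 ⟨hj, hmin⟩

theorem firstOcc_eq_firstOcc_iff : firstOcc c i = firstOcc c j ↔ c i = c j := by
  refine ⟨fun h => ?_, fun h => by simp only [firstOcc, h]⟩
  rw [← firstOcc_spec c i, h, firstOcc_spec c j]

theorem canonIndex_lt_canonIndex (h : firstOcc c i < firstOcc c j) :
    canonIndex c i < canonIndex c j := by
  refine card_lt_card <| (ssubset_iff_of_subset <|
    image_subset_image (range_subset_range.2 h.le)).2 ⟨c i, ?_, ?_⟩
  · exact mem_image.2 ⟨firstOcc c i, mem_range.2 h, firstOcc_spec c i⟩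
  · simp only [mem_image, mem_range, not_exists, not_and]
    exact fun _ => ne_of_lt_firstOcc

theorem canonIndex_eq_canonIndex_iff : canonIndex c i = canonIndex c j ↔ c i = c j := by
  refine ⟨fun h => ?_, fun h => by simp only [canonIndex, firstOcc_eq_firstOcc_iff.2 h]⟩
  rw [← firstOcc_eq_firstOcc_iff]
  by_contra hne
  rcases Nat.lt_or_gt_of_ne hne with hlt | hlt
  · exact (canonIndex_lt_canonIndex hlt).ne h
  · exact (canonIndex_lt_canonIndex hlt).ne' h

theorem canonIndex_le_firstOcc (c : ℕ → α) (k : ℕ) : canonIndex c k ≤ firstOcc c k :=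
  card_image_le.trans (card_range _).le

theorem canonIndex_zero (c : ℕ → α) : canonIndex c 0 = 0 :=
  Nat.le_zero.1 ((canonIndex_le_firstOcc c 0).trans (firstOcc_le c 0))

theorem canonIndex_of_firstOcc_eq_self (h : firstOcc c k = k) :
    canonIndex c k = #((range k).image c) := by
  rw [canonIndex, h]

theorem exists_firstOcc_eq_self_of_lt_card_image (c : ℕ → α) (t : ℕ) {i : ℕ}
    (hi : i < #((range t).image c)) :
    ∃ s < t, firstOcc c s = s ∧ #((range s).image c) = i := by
  induction t with
  | zero => simp at hi
  | succ t ih =>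
    rw [range_add_one, image_insert] at hi
    by_cases hc : c t ∈ (range t).image c
    · rw [insert_eq_of_mem hc] at hi
      obtain ⟨s, hs, hfirst, hcard⟩ := ih hi
      exact ⟨s, hs.trans (Nat.lt_succ_self t), hfirst, hcard⟩
    · rw [card_insert_of_notMem hc] at hi
      rcases (Nat.lt_succ_iff_lt_or_eq.1 hi) with hlt | rfl
      · obtain ⟨s, hs, hfirst, hcard⟩ := ih hlt
        exact ⟨s, hs.trans (Nat.lt_succ_self t), hfirst, hcard⟩
      · refine ⟨t, Nat.lt_succ_self t, firstOcc_eq_of rfl fun j hj hcj => hc ?_, rfl⟩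
        exact mem_image.2 ⟨j, mem_range.2 hj, hcj⟩

theorem exists_canonIndex_eq_of_lt (hi : i < canonIndex c k) :
    ∃ s < firstOcc c k, firstOcc c s = s ∧ canonIndex c s = i := by
  obtain ⟨s, hs, hfirst, hcard⟩ := exists_firstOcc_eq_self_of_lt_card_image c _ hi
  exact ⟨s, hs, hfirst, by rw [canonIndex_of_firstOcc_eq_self hfirst, hcard]⟩

theorem sInf_canonIndex_eq (c : ℕ → α) (k : ℕ) :
    sInf {j | canonIndex c j = canonIndex c k} = firstOcc c k := by
  simp only [canonIndex_eq_canonIndex_iff]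
  refine le_antisymm (Nat.sInf_le (firstOcc_spec c k)) (le_csInf ⟨k, rfl⟩ fun j hj => ?_)
  rw [← firstOcc_eq_firstOcc_iff.2 hj]
  exact firstOcc_le c j

theorem isDistIndexMap_canonIndex (c : ℕ → α) : IsDistIndexMap (canonIndex c) := by
  refine ⟨fun i => {k | canonIndex c k = i}, ⟨?_, fun k => ⟨_, rfl⟩, ?_⟩, fun k => ?_⟩
  · exact fun i j hij => Set.disjoint_left.2 fun k hi hj => hij (hi.symm.trans hj)
  · rintro i j hij ⟨k, rfl⟩
    obtain ⟨s, hs, hfirst, rfl⟩ := exists_canonIndex_eq_of_lt hij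
    refine ⟨⟨s, rfl⟩, ?_⟩
    simpa only [sInf_canonIndex_eq, hfirst] using hs
  · simp [blockIndex]

theorem dependsOn_canonIndex (k : ℕ) : DependsOn (fun c : ℕ → α => canonIndex c k) (Set.Iic k) := by
  intro c c' h
  dsimp only
  have hfirst : firstOcc c' k = firstOcc c k := by
    refine firstOcc_eq_of ?_ fun i hi => ?_
    · rw [← h _ (firstOcc_le c k), ← h k Set.self_mem_Iic, firstOcc_spec c k]
    · rw [← h i (hi.le.trans (firstOcc_le c k)), ← h k Set.self_mem_Iic]
      exact ne_of_lt_firstOcc hi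
  rw [canonIndex, canonIndex, hfirst]
  exact congrArg card <| image_congr fun i hi =>
    h i ((mem_range.1 hi).le.trans (firstOcc_le c k))

end CanonicalIndex

section Relabelling

theorem Equiv.Perm.exists_supported_apply_eq {ι β : Type*} {g h : ι → β} {s : Set β}
    (hs : s.Finite) (hgh : ∀ i j, g i = g j ↔ h i = h j)
    (hdiff : ∀ i, g i ≠ h i → g i ∈ s ∧ h i ∈ s) :
    ∃ ρ : Equiv.Perm β, (∀ x ∉ s, ρ x = x) ∧ ∀ i, ρ (g i) = h i := by
  classical
  have hmem : ∀ i, g i ∈ s → h i ∈ s := fun i hi => by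
    by_cases hne : g i = h i
    · exact hne ▸ hi
    · exact (hdiff i hne).2
  let T := {x : s // (x : β) ∈ Set.range g}
  have : Finite s := hs.to_subtype
  obtain ⟨σ, hσ⟩ := Equiv.Perm.exists_extending_pair (fun x : T => x.1)
    (fun x : T => (⟨h x.2.choose, hmem _ (x.2.choose_spec.symm ▸ x.1.2)⟩ : s))
    (fun x y hxy => Subtype.ext hxy)
    (fun x y hxy => Subtype.ext <| Subtype.ext <| by
      rw [← x.2.choose_spec, ← y.2.choose_spec]
      exact (hgh _ _).2 (congrArg Subtype.val hxy))
  refine ⟨Equiv.Perm.ofSubtype σ, fun x hx => Equiv.Perm.ofSubtype_apply_of_not_mem σ hx,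
    fun i => ?_⟩
  by_cases hi : g i ∈ s
  · rw [Equiv.Perm.ofSubtype_apply_of_mem σ hi]
    have hx : ((⟨g i, hi⟩ : s) : β) ∈ Set.range g := ⟨i, rfl⟩
    rw [show (⟨g i, hi⟩ : s) = (⟨⟨g i, hi⟩, hx⟩ : T).1 from rfl, hσ]
    exact (hgh _ _).1 hx.choose_spec
  · rw [Equiv.Perm.ofSubtype_apply_of_not_mem σ hi]
    by_contra hne
    exact hi (hdiff i hne).1

variable {α : Type*} [DecidableEq α] {τ : Equiv.Perm ℕ} {K : ℕ}

theorem Equiv.Perm.apply_lt_iff_of_eq_self_of_le (hK : ∀ j, K ≤ j → τ j = j) {t : ℕ} (ht : K ≤ t)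
    (j : ℕ) : τ j < t ↔ j < t := by
  by_cases hj : K ≤ j
  · rw [hK j hj]
  · have hτj : τ j < K := by
      by_contra h
      exact hj (τ.injective (hK _ (not_lt.1 h)) ▸ not_lt.1 h)
    omega

theorem image_range_comp_perm (a : ℕ → α) (hK : ∀ j, K ≤ j → τ j = j) {t : ℕ} (ht : K ≤ t) :
    (range t).image (a ∘ τ) = (range t).image a := by
  rw [← image_image]
  congr 1
  ext j
  simp only [mem_image, mem_range]
  refine ⟨fun ⟨i, hi, hij⟩ => hij ▸ (τ.apply_lt_iff_of_eq_self_of_le hK ht i).2 hi,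
    fun hj => ⟨τ.symm j, ?_, τ.apply_symm_apply j⟩⟩
  rw [← τ.apply_lt_iff_of_eq_self_of_le hK ht, τ.apply_symm_apply]
  exact hj

theorem canonIndex_comp_perm_of_le (a : ℕ → α) (hK : ∀ j, K ≤ j → τ j = j) {k : ℕ}
    (hk : K ≤ firstOcc (a ∘ τ) k) : canonIndex (a ∘ τ) k = canonIndex a (τ k) := by
  have hfirst : firstOcc a (τ k) = firstOcc (a ∘ τ) k := by
    refine firstOcc_eq_of ?_ fun j hj hja => ?_
    · have h := firstOcc_spec (a ∘ τ) k
      rwa [Function.comp_apply, hK _ hk] at h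
    · refine ne_of_lt_firstOcc (c := a ∘ τ) (j := τ.symm j) ?_ (by simpa using hja)
      rw [← τ.apply_lt_iff_of_eq_self_of_le hK hk, τ.apply_symm_apply]
      exact hj
  rw [canonIndex, canonIndex, hfirst, image_range_comp_perm a hK hk]

theorem canonIndex_comp_perm_lt_of_lt (a : ℕ → α) (hK : ∀ j, K ≤ j → τ j = j) {k : ℕ}
    (hk : firstOcc (a ∘ τ) k < K) : canonIndex (a ∘ τ) k < K ∧ canonIndex a (τ k) < K := by
  set t := firstOcc (a ∘ τ) k
  refine ⟨(canonIndex_le_firstOcc _ k).trans_lt hk, ?_⟩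
  have hτt : τ t < K := (τ.apply_lt_iff_of_eq_self_of_le hK le_rfl t).2 hk
  calc canonIndex a (τ k) = canonIndex a (τ t) :=
        canonIndex_eq_canonIndex_iff.2 (firstOcc_spec (a ∘ τ) k).symm
    _ ≤ τ t := (canonIndex_le_firstOcc a _).trans (firstOcc_le a _)
    _ < K := hτt

theorem exists_perm_canonIndex_comp (a : ℕ → α) (hτ : {x | τ x ≠ x}.Finite) (hτ0 : τ 0 = 0) :
    ∃ ρ : Equiv.Perm ℕ, {x | ρ x ≠ x}.Finite ∧ ρ 0 = 0 ∧
      ∀ k, ρ (canonIndex (a ∘ τ) k) = canonIndex a (τ k) := by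
  obtain ⟨K, hK⟩ : ∃ K, ∀ j, K ≤ j → τ j = j := by
    obtain ⟨M, hM⟩ := hτ.bddAbove
    exact ⟨M + 1, fun j hj => by_contra fun hne => by have := hM hne; omega⟩
  obtain ⟨ρ, hρK, hρ⟩ := Equiv.Perm.exists_supported_apply_eq (g := canonIndex (a ∘ τ))
    (h := fun k => canonIndex a (τ k)) (Set.finite_Iio K)
    (fun i j => canonIndex_eq_canonIndex_iff.trans (canonIndex_eq_canonIndex_iff (c := a)).symm)
    fun k hne => by
      by_cases hk : K ≤ firstOcc (a ∘ τ) k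
      · exact absurd (canonIndex_comp_perm_of_le a hK hk) hne
      · exact canonIndex_comp_perm_lt_of_lt a hK (not_le.1 hk)
  refine ⟨ρ, (Set.finite_Iio K).subset fun x hx => ?_, ?_, hρ⟩
  · by_contra h
    exact hx (hρK x h)
  · simpa only [canonIndex_zero, hτ0] using hρ 0

end Relabelling

theorem DependsOn.measurable_of_finite {ι α β : Type*} [MeasurableSpace α] [Countable α]
    [MeasurableSingletonClass α] [MeasurableSpace β] [Nonempty β] {f : (ι → α) → β}
    {s : Set ι} (hs : s.Finite) (hf : DependsOn f s) : Measurable f := by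
  obtain ⟨g, rfl⟩ := dependsOn_iff_exists_comp.1 hf
  have : Finite s := hs.to_subtype
  exact (measurable_of_countable g).comp (measurable_pi_lambda _ fun i => measurable_pi_apply i.1)

theorem measurable_canonIndex {α : Type*} [DecidableEq α] [MeasurableSpace α] [Countable α]
    [MeasurableSingletonClass α] : Measurable (canonIndex : (ℕ → α) → ℕ → ℕ) :=
  measurable_pi_lambda _ fun k =>
    (dependsOn_canonIndex k).measurable_of_finite (Set.finite_Iic k)

theorem Measurable.reindex {α ι κ β : Type*} [MeasurableSpace α] [MeasurableSpace κ]
    [Countable κ] [MeasurableSingletonClass κ] [MeasurableSpace β] {f : α → ι → κ}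
    (hf : Measurable f) : Measurable fun p : α × (κ → β) => p.2 ∘ f p.1 := by
  have heval : Measurable fun q : κ × (κ → β) => q.2 q.1 :=
    measurable_from_prod_countable_right fun n => measurable_pi_apply n
  exact measurable_pi_lambda _ fun i =>
    heval.comp (((measurable_pi_apply i).comp (hf.comp measurable_fst)).prodMk measurable_snd)

theorem measurable_comp_right {ι κ β : Type*} [MeasurableSpace β] (f : ι → κ) :
    Measurable fun u : κ → β => u ∘ f :=
  measurable_pi_lambda _ fun i => measurable_pi_apply (f i)

theorem map_comp_canonIndex_comp_perm {α β : Type*} [DecidableEq α] [MeasurableSpace β]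
    {ν : Measure (ℕ → β)} (hν : ∀ ρ : Equiv.Perm ℕ, {x | ρ x ≠ x}.Finite → ρ 0 = 0 →
      ν.map (fun u => u ∘ ρ) = ν) (a : ℕ → α) {τ : Equiv.Perm ℕ}
    (hτ : {x | τ x ≠ x}.Finite) (hτ0 : τ 0 = 0) :
    ν.map (fun u => u ∘ (canonIndex a ∘ τ)) = ν.map (fun u => u ∘ canonIndex (a ∘ τ)) := by
  obtain ⟨ρ, hρ, hρ0, hρa⟩ := exists_perm_canonIndex_comp a hτ hτ0
  have hsplit : (fun u : ℕ → β => u ∘ (canonIndex a ∘ τ))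
      = (fun u => u ∘ canonIndex (a ∘ τ)) ∘ fun u => u ∘ ρ := by
    funext u k
    simp [hρa]
  rw [hsplit, ← Measure.map_map (measurable_comp_right _) (measurable_comp_right ρ), hν ρ hρ hρ0]

section Independence

variable {Ω α β γ : Type*} [MeasurableSpace Ω] [MeasurableSpace α] [MeasurableSpace β]
  [MeasurableSpace γ] {P : Measure Ω} [IsFiniteMeasure P] {X X' : Ω → α} {Y : Ω → β}
  {F G : α → β → γ}

theorem ProbabilityTheory.IndepFun.map_eq_map_prod_map (hXY : IndepFun X Y P)
    (hX : Measurable X) (hY : Measurable Y) (hF : Measurable (Function.uncurry F)) :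
    P.map (fun ω => F (X ω) (Y ω)) = ((P.map X).prod (P.map Y)).map (Function.uncurry F) := by
  rw [← (indepFun_iff_map_prod_eq_prod_map_map hX.aemeasurable hY.aemeasurable).1 hXY,
    Measure.map_map hF (hX.prodMk hY)]
  rfl

theorem ProbabilityTheory.IndepFun.map_eq_of_map_eq (hXY : IndepFun X Y P)
    (hX'Y : IndepFun X' Y P) (hX : Measurable X) (hX' : Measurable X') (hY : Measurable Y)
    (hF : Measurable (Function.uncurry F)) (hlaw : P.map X = P.map X') :
    P.map (fun ω => F (X ω) (Y ω)) = P.map (fun ω => F (X' ω) (Y ω)) := by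
  rw [hXY.map_eq_map_prod_map hX hY hF, hX'Y.map_eq_map_prod_map hX' hY hF, hlaw]

theorem ProbabilityTheory.IndepFun.map_eq_of_forall_map_eq (hXY : IndepFun X Y P)
    (hX : Measurable X) (hY : Measurable Y) (hF : Measurable (Function.uncurry F))
    (hG : Measurable (Function.uncurry G))
    (h : ∀ ω, (P.map Y).map (F (X ω)) = (P.map Y).map (G (X ω))) :
    P.map (fun ω => F (X ω) (Y ω)) = P.map (fun ω => G (X ω) (Y ω)) := by
  rw [hXY.map_eq_map_prod_map hX hY hF, hXY.map_eq_map_prod_map hX hY hG]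
  ext s hs
  rw [Measure.map_apply hF hs, Measure.map_apply hG hs, Measure.prod_apply (hF hs),
    Measure.prod_apply (hG hs), lintegral_map (measurable_measure_prodMk_left (hF hs)) hX,
    lintegral_map (measurable_measure_prodMk_left (hG hs)) hX]
  refine lintegral_congr fun ω => ?_
  have hω := congrArg (fun m => m s) (h ω)
  rwa [Measure.map_apply hF.of_uncurry_left hs, Measure.map_apply hG.of_uncurry_left hs] at hω

end Independence

theorem sequence_blockIndex_exchangeable_general
    {Ω : Type*} [MeasurableSpace Ω] (P : Measure Ω) [IsProbabilityMeasure P]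
    (U : ℕ → Ω → ℝ) (hUmeas : ∀ i, Measurable (U i))
    (hUexch : ∀ τ : Equiv.Perm ℕ, {x | τ x ≠ x}.Finite → τ 0 = 0 →
      Measure.map (fun ω (i : ℕ) => U (τ i) ω) P = Measure.map (fun ω (i : ℕ) => U i ω) P)
    (A : Ω → ℕ → ℕ) (hAmeas : Measurable A)
    (hindep : ProbabilityTheory.IndepFun A (fun ω (i : ℕ) => U i ω) P)
    (hAexch : ∀ σ : Equiv.Perm ℕ, {x | σ x ≠ x}.Finite → σ 0 = 0 →
      ∀ A' : Ω → ℕ → ℕ,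
        (∀ ω, IsDistIndexMap (A' ω) ∧
          ∀ i j, (A' ω i = A' ω j ↔ A ω (σ i) = A ω (σ j))) →
        Measure.map A' P = Measure.map A P)
    (τ : Equiv.Perm ℕ) (hτfin : {x | τ x ≠ x}.Finite) (hτ0 : τ 0 = 0) :
    Measure.map (fun ω (k : ℕ) => U (A ω (τ k)) ω) P
      = Measure.map (fun ω (k : ℕ) => U (A ω k) ω) P := by
  set Y : Ω → ℕ → ℝ := fun ω i => U i ω
  have hY : Measurable Y := measurable_pi_lambda _ hUmeas
  have hcomp : Measurable fun a : ℕ → ℕ => a ∘ τ := measurable_comp_right τ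
  have hUinv : ∀ ρ : Equiv.Perm ℕ, {x | ρ x ≠ x}.Finite → ρ 0 = 0 →
      (P.map Y).map (fun u => u ∘ ρ) = P.map Y := fun ρ hρ hρ0 => by
    rw [Measure.map_map (measurable_comp_right ρ) hY]
    exact hUexch ρ hρ hρ0
  -- exchangeability under `σ = 1`: the law of `A` is that of its canonical relabelling
  have hlaw₁ : P.map A = P.map fun ω => canonIndex (A ω) :=
    (hAexch 1 (by simp) rfl _ fun ω =>
      ⟨isDistIndexMap_canonIndex _, fun _ _ => canonIndex_eq_canonIndex_iff⟩).symm
  have hlawτ : P.map (fun ω => canonIndex (A ω ∘ τ)) = P.map A :=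
    hAexch τ hτfin hτ0 _ fun ω =>
      ⟨isDistIndexMap_canonIndex _, fun _ _ => canonIndex_eq_canonIndex_iff⟩
  calc P.map (fun ω k => U (A ω (τ k)) ω)
      = P.map fun ω => Y ω ∘ (canonIndex (A ω) ∘ τ) :=
        hindep.map_eq_of_map_eq (F := fun a u => u ∘ (a ∘ τ))
          (hindep.comp measurable_canonIndex measurable_id) hAmeas
          (measurable_canonIndex.comp hAmeas) hY hcomp.reindex hlaw₁
    _ = P.map fun ω => Y ω ∘ canonIndex (A ω ∘ τ) :=
        hindep.map_eq_of_forall_map_eq (F := fun a u => u ∘ (canonIndex a ∘ τ))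
          (G := fun a u => u ∘ canonIndex (a ∘ τ)) hAmeas hY
          (hcomp.comp measurable_canonIndex).reindex (measurable_canonIndex.comp hcomp).reindex
          fun ω => map_comp_canonIndex_comp_perm hUinv (A ω) hτfin hτ0
    _ = P.map fun ω k => U (A ω k) ω :=
        (hindep.comp (measurable_canonIndex.comp hcomp) measurable_id).map_eq_of_map_eq
          (F := fun a u => u ∘ a) hindep (measurable_canonIndex.comp (hcomp.comp hAmeas)) hAmeas
          hY measurable_id.reindex hlawτ

/-- Let `(U_i)_{i≥1}` be an exchangeable sequence of `[0,1]`-valued random variables,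
`U₀ := 0`, and `Π` an exchangeable random distinguished partition of ℤ₊ (encoded by
its random index map `A ω = α_{Π(ω)}`) independent of `(U_i)_{i≥1}`.  Exchangeability
of `Π` means: for every finitely supported permutation `σ` of ℤ₊ with `σ(0) = 0`, the
partition `σΠ` (the distinguished partition whose index map `A'` satisfies
`A' i = A' j ↔ A (σ i) = A (σ j)`, i.e. `i,j` are in the same block of `σΠ` iff
`σ(i),σ(j)` are in the same block of `Π`) has the same law as `Π`.
Then the sequence `(U_{α_Π(k)})_{k≥1}` is exchangeable: for every finitely supported
permutation `τ` of `{1,2,…}`, `(U_{α_Π(τ(k))})_{k≥1}` has the same law as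
`(U_{α_Π(k)})_{k≥1}`. -/
theorem sequence_blockIndex_exchangeable
    {Ω : Type*} [MeasurableSpace Ω] (P : Measure Ω) [IsProbabilityMeasure P]
    (U : ℕ → Ω → ℝ) (hUmeas : ∀ i, Measurable (U i))
    (hUrange : ∀ i ω, U i ω ∈ Set.Icc (0 : ℝ) 1)
    (hU0 : ∀ ω, U 0 ω = 0)
    (hUexch : ∀ τ : Equiv.Perm ℕ, {x | τ x ≠ x}.Finite → τ 0 = 0 →
      Measure.map (fun ω (i : ℕ) => U (τ i) ω) P = Measure.map (fun ω (i : ℕ) => U i ω) P)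
    (A : Ω → ℕ → ℕ) (hAmeas : Measurable A)
    (hA : ∀ ω, IsDistIndexMap (A ω))
    (hindep : ProbabilityTheory.IndepFun A (fun ω (i : ℕ) => U i ω) P)
    (hAexch : ∀ σ : Equiv.Perm ℕ, {x | σ x ≠ x}.Finite → σ 0 = 0 →
      ∀ A' : Ω → ℕ → ℕ,
        (∀ ω, IsDistIndexMap (A' ω) ∧
          ∀ i j, (A' ω i = A' ω j ↔ A ω (σ i) = A ω (σ j))) →
        Measure.map A' P = Measure.map A P)
    (τ : Equiv.Perm ℕ) (hτfin : {x | τ x ≠ x}.Finite) (hτ0 : τ 0 = 0) :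
    Measure.map (fun ω (k : ℕ) => U (A ω (τ k)) ω) P
      = Measure.map (fun ω (k : ℕ) => U (A ω k) ω) P :=
  sequence_blockIndex_exchangeable_general P U hUmeas hUexch A hAmeas hindep hAexch τ hτfin hτ0
end

section
/- There exists a constant γ ∈ (0,1] such that for every integer n ≥ 2 and every s ∈ [0,1]: γ(e^{−ns} − 1 + ns) ≤ ns − 1 + (1−s)^n ≤ e^{−ns} − 1 + ns. -/
/-!
Both inequalities compare `φ(t) = n t - 1 + (1 - t)^n` with `ψ(t) = e^{-nt} - 1 + n t`, two
functions vanishing at `0`. The upper bound is `(1 - s)^n ≤ e^{-ns}`. For the lower bound with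
`γ = 1/2` it suffices to compare derivatives, i.e. to show `(1 - t)^{n-1} ≤ (1 + e^{-nt})/2`;
this holds because `(1 - t)^{n-1} ≤ e^{-(n-1)t} ≤ e^{-nt/2}` for `n ≥ 2`, and
`e^{x/2} ≤ (1 + e^x)/2` by AM-GM.
-/

open Real Set

lemma one_sub_pow_le_exp_neg_mul (n : ℕ) {s : ℝ} (hs : s ≤ 1) :
    (1 - s) ^ n ≤ exp (-(n * s)) :=
  calc (1 - s) ^ n ≤ exp (-s) ^ n := pow_le_pow_left₀ (by linarith) (one_sub_le_exp_neg s) n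
    _ = exp (-(n * s)) := by rw [← exp_nat_mul]; ring_nf

lemma exp_half_le_one_add_exp_div_two (x : ℝ) : exp (x / 2) ≤ (1 + exp x) / 2 := by
  have hsq : exp (x / 2) ^ 2 = exp x := by rw [← exp_nat_mul]; ring_nf
  nlinarith [sq_nonneg (exp (x / 2) - 1)]

lemma one_sub_pow_pred_le {n : ℕ} (hn : 2 ≤ n) {t : ℝ} (ht : t ∈ Icc (0 : ℝ) 1) :
    (1 - t) ^ (n - 1) ≤ (1 + exp (-(n * t))) / 2 := by
  have hn' : (2 : ℝ) ≤ n := by exact_mod_cast hn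
  calc (1 - t) ^ (n - 1) ≤ exp (-((n - 1 : ℕ) * t)) := one_sub_pow_le_exp_neg_mul _ ht.2
    _ ≤ exp (-(n * t) / 2) := by
        gcongr
        rw [Nat.cast_pred (by omega)]
        nlinarith [ht.1]
    _ ≤ (1 + exp (-(n * t))) / 2 := exp_half_le_one_add_exp_div_two _

lemma hasDerivAt_mul_sub_one_add_one_sub_pow (n : ℕ) (t : ℝ) :
    HasDerivAt (fun t : ℝ => n * t - 1 + (1 - t) ^ n) (n - n * (1 - t) ^ (n - 1)) t := by
  have hpow := ((hasDerivAt_id' t).const_sub 1).fun_pow n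
  exact ((((hasDerivAt_id' t).const_mul (n : ℝ)).sub_const 1).add hpow).congr_deriv (by ring)

lemma hasDerivAt_exp_neg_mul_sub_one_add_mul (n : ℕ) (t : ℝ) :
    HasDerivAt (fun t : ℝ => exp (-(n * t)) - 1 + n * t) (n - n * exp (-(n * t))) t := by
  have hexp := ((hasDerivAt_id' t).const_mul (n : ℝ)).fun_neg.exp
  exact ((hexp.sub_const 1).add ((hasDerivAt_id' t).const_mul (n : ℝ))).congr_deriv (by ring)

lemma exp_neg_mul_sub_one_add_mul_div_two_le {n : ℕ} (hn : 2 ≤ n) {s : ℝ}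
    (hs : s ∈ Icc (0 : ℝ) 1) :
    (exp (-(n * s)) - 1 + n * s) / 2 ≤ n * s - 1 + (1 - s) ^ n := by
  let gap : ℝ → ℝ := fun t => n * t - 1 + (1 - t) ^ n - (exp (-(n * t)) - 1 + n * t) / 2
  have hgap (t : ℝ) : HasDerivAt gap
      (n - n * (1 - t) ^ (n - 1) - (n - n * exp (-(n * t))) / 2) t :=
    (hasDerivAt_mul_sub_one_add_one_sub_pow n t).sub
      ((hasDerivAt_exp_neg_mul_sub_one_add_mul n t).div_const 2)
  have hmono : MonotoneOn gap (Icc 0 1) := by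
    refine monotoneOn_of_hasDerivWithinAt_nonneg (convex_Icc 0 1)
      (fun t _ => (hgap t).continuousAt.continuousWithinAt)
      (fun t _ => (hgap t).hasDerivWithinAt) fun t ht => ?_
    have hn0 : (0 : ℝ) ≤ n := n.cast_nonneg
    nlinarith [one_sub_pow_pred_le hn (interior_subset ht)]
  have h := hmono ⟨le_rfl, zero_le_one⟩ hs hs.1
  simp only [gap, mul_zero, neg_zero, exp_zero, sub_zero, one_pow] at h
  linarith

/-- There exists a constant `γ ∈ (0,1]` such that for every integer `n ≥ 2` and every
`s ∈ [0,1]`: `γ(e^{−ns} − 1 + ns) ≤ ns − 1 + (1−s)^n ≤ e^{−ns} − 1 + ns`. -/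
theorem binomial_exp_comparison :
    ∃ γ : ℝ, 0 < γ ∧ γ ≤ 1 ∧
      ∀ n : ℕ, 2 ≤ n → ∀ s : ℝ, s ∈ Set.Icc (0 : ℝ) 1 →
        γ * (Real.exp (-(n * s)) - 1 + n * s) ≤ n * s - 1 + (1 - s) ^ n ∧
        n * s - 1 + (1 - s) ^ n ≤ Real.exp (-(n * s)) - 1 + n * s := by
  refine ⟨1 / 2, by norm_num, by norm_num, fun n hn s hs => ⟨?_, ?_⟩⟩
  · linarith [exp_neg_mul_sub_one_add_mul_div_two_le hn hs]
  · linarith [one_sub_pow_le_exp_neg_mul n hs.2]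
end

section
/- There exist constants C > 0 and C′ > 0 such that for every integer q ≥ 2: C Ψ(q) ≤ Φ(q) ≤ C′ Ψ(q). -/
open MeasureTheory

/-- `s ∈ P_m`: `s = (s₀,s₁,s₂,…)` with `s₀ ≥ 0`, `s₁ ≥ s₂ ≥ … ≥ 0`, and
`Σ_{i≥0} s_i ≤ 1`. -/
def MemPm (s : ℕ → ℝ) : Prop :=
  (∀ i, 0 ≤ s i) ∧ (∀ i, 1 ≤ i → s (i + 1) ≤ s i) ∧ Summable s ∧ ∑' i, s i ≤ 1

/-- `Φ(q) = c₀q + (c₁/2)q(q−1) + ∫_{P_m} (q s₀ + Σ_{i≥1} (q s_i − 1 + (1−s_i)^q)) ν(ds)`. -/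
noncomputable def Phi (c₀ c₁ : ℝ) (ν : Measure (ℕ → ℝ)) (q : ℕ) : ℝ :=
  c₀ * q + c₁ / 2 * q * ((q : ℝ) - 1)
    + ∫ s, ((q : ℝ) * s 0 + ∑' i : ℕ, ((q : ℝ) * s (i + 1) - 1 + (1 - s (i + 1)) ^ q)) ∂ν

/-- `Ψ(q) = c₀q + (c₁/2)q² + ∫_{P_m} (q s₀ + Σ_{i≥1} (e^{−q s_i} − 1 + q s_i)) ν(ds)`. -/
noncomputable def Psi (c₀ c₁ : ℝ) (ν : Measure (ℕ → ℝ)) (q : ℝ) : ℝ :=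
  c₀ * q + c₁ / 2 * q ^ 2
    + ∫ s, (q * s 0 + ∑' i : ℕ, (Real.exp (-(q * s (i + 1))) - 1 + q * s (i + 1))) ∂ν

/-!
Write φ_q(x) = qx − 1 + (1 − x)^q and ψ(y) = e^{−y} − 1 + y, so that the integrands of Φ(q) and
Ψ(q) are q s₀ + Σ φ_q(s_i) and q s₀ + Σ ψ(q s_i). On [0, 1] we have φ_q(x) ≤ ψ(qx), since
1 − x ≤ e^{−x}, and ψ(qx) ≤ 2 φ_q(x) for q ≥ 2: both sides vanish at 0, and with
a = e^{−qx/2} ≥ e^{−(q−1)x} ≥ (1 − x)^{q−1} the derivative of the difference is at least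
2q(1 − a) − q(1 − a²) = q(1 − a)². As ψ(y) ≤ y², the integrability hypothesis dominates both
integrands, so the pointwise comparison integrates; the c₁-terms compare through
q²/4 ≤ q(q − 1)/2 ≤ q²/2. This gives C = 1/2 and C' = 1.
-/

open Set

lemma aestronglyMeasurable_tsum {α E : Type*} [MeasurableSpace α] [NormedAddCommGroup E]
    {μ : Measure α} {f : ℕ → α → E} (hf : ∀ i, AEStronglyMeasurable (f i) μ)
    (hs : ∀ᵐ x ∂μ, Summable fun i => f i x) :
    AEStronglyMeasurable (fun x => ∑' i, f i x) μ :=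
  aestronglyMeasurable_of_tendsto_ae Filter.atTop
    (fun _ => Finset.aestronglyMeasurable_fun_sum _ fun i _ => hf i)
    (hs.mono fun _ h => h.hasSum.tendsto_sum_nat)

noncomputable def phiKernel (q : ℕ) (x : ℝ) : ℝ := q * x - 1 + (1 - x) ^ q

noncomputable def psiKernel (y : ℝ) : ℝ := Real.exp (-y) - 1 + y

lemma psiKernel_nonneg (y : ℝ) : 0 ≤ psiKernel y := by
  have := Real.add_one_le_exp (-y)
  unfold psiKernel; linarith

lemma psiKernel_le_sq {y : ℝ} (hy : 0 ≤ y) : psiKernel y ≤ y ^ 2 := by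
  unfold psiKernel
  rcases le_or_gt y 1 with hy1 | hy1
  · have h := Real.abs_exp_sub_one_sub_id_le (x := -y) (by rwa [abs_neg, abs_of_nonneg hy])
    linarith [(abs_le.1 h).2]
  · nlinarith [Real.exp_le_one_iff.2 (neg_nonpos.2 hy)]

lemma phiKernel_nonneg (q : ℕ) {x : ℝ} (hx : x ≤ 1) : 0 ≤ phiKernel q x := by
  have := one_add_mul_le_pow (a := -x) (by linarith) q
  rw [mul_neg, ← sub_eq_add_neg, ← sub_eq_add_neg] at this
  unfold phiKernel; linarith

lemma phiKernel_le_psiKernel (q : ℕ) {x : ℝ} (hx : x ≤ 1) : phiKernel q x ≤ psiKernel (q * x) := by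
  have : (1 - x) ^ q ≤ Real.exp (-(q * x)) := by
    rw [neg_mul_eq_mul_neg, Real.exp_nat_mul]
    exact pow_le_pow_left₀ (by linarith) (by linarith [Real.add_one_le_exp (-x)]) q
  unfold phiKernel psiKernel; linarith

lemma one_sub_pow_le_exp_neg_half_mul {q : ℕ} (hq : 2 ≤ q) {x : ℝ} (hx0 : 0 ≤ x) (hx1 : x ≤ 1) :
    (1 - x) ^ (q - 1) ≤ Real.exp (-(q * x / 2)) := by
  have hq' : (q : ℝ) / 2 ≤ ((q - 1 : ℕ) : ℝ) := by
    rw [Nat.cast_sub (by omega)]; linarith [(Nat.ofNat_le_cast.2 hq : (2 : ℝ) ≤ q)]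
  calc (1 - x) ^ (q - 1) ≤ Real.exp (-x) ^ (q - 1) :=
        pow_le_pow_left₀ (by linarith) (by linarith [Real.add_one_le_exp (-x)]) _
    _ = Real.exp (-(((q - 1 : ℕ) : ℝ) * x)) := by rw [← Real.exp_nat_mul]; ring_nf
    _ ≤ Real.exp (-(q * x / 2)) := Real.exp_le_exp.2 (by nlinarith)

lemma hasDerivAt_phiKernel (q : ℕ) (x : ℝ) :
    HasDerivAt (phiKernel q) (q * (1 - (1 - x) ^ (q - 1))) x :=
  ((((hasDerivAt_id' x).const_mul (q : ℝ)).sub_const 1).add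
    (((hasDerivAt_id' x).const_sub 1).pow q)).congr_deriv (by ring)

lemma hasDerivAt_psiKernel (y : ℝ) : HasDerivAt psiKernel (1 - Real.exp (-y)) y :=
  (((hasDerivAt_neg y).exp.sub_const 1).add (hasDerivAt_id y)).congr_deriv (by ring)

lemma psiKernel_le_two_mul_phiKernel {q : ℕ} (hq : 2 ≤ q) {x : ℝ} (hx0 : 0 ≤ x) (hx1 : x ≤ 1) :
    psiKernel (q * x) ≤ 2 * phiKernel q x := by
  have hderiv (x : ℝ) : HasDerivAt (fun x => 2 * phiKernel q x - psiKernel (q * x))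
      (2 * (q * (1 - (1 - x) ^ (q - 1))) - (1 - Real.exp (-(q * x))) * (q * 1)) x :=
    ((hasDerivAt_phiKernel q x).const_mul 2).sub
      ((hasDerivAt_psiKernel (q * x)).comp x ((hasDerivAt_id x).const_mul (q : ℝ)))
  have hmono : MonotoneOn (fun x => 2 * phiKernel q x - psiKernel (q * x)) (Icc 0 1) := by
    refine monotoneOn_of_hasDerivWithinAt_nonneg (convex_Icc 0 1)
      (fun x _ => (hderiv x).continuousAt.continuousWithinAt)
      (fun x _ => (hderiv x).hasDerivWithinAt) ?_
    rw [interior_Icc]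
    rintro x ⟨hx0, hx1⟩
    have hpow := one_sub_pow_le_exp_neg_half_mul hq hx0.le hx1.le
    have hsq : Real.exp (-(q * x)) = Real.exp (-(q * x / 2)) ^ 2 := by
      rw [← Real.exp_nat_mul]; ring_nf
    have hq0 : (0 : ℝ) ≤ q := Nat.cast_nonneg q
    rw [hsq]
    nlinarith [mul_nonneg hq0 (sq_nonneg (1 - Real.exp (-(q * x / 2))))]
  simpa [phiKernel, psiKernel] using hmono ⟨le_rfl, zero_le_one⟩ ⟨hx0, hx1⟩ hx0

noncomputable def phiIntegrand (q : ℕ) (s : ℕ → ℝ) : ℝ :=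
  q * s 0 + ∑' i, phiKernel q (s (i + 1))

noncomputable def psiIntegrand (q : ℝ) (s : ℕ → ℝ) : ℝ :=
  q * s 0 + ∑' i, psiKernel (q * s (i + 1))

lemma Phi_eq (c₀ c₁ : ℝ) (ν : Measure (ℕ → ℝ)) (q : ℕ) :
    Phi c₀ c₁ ν q = c₀ * q + c₁ / 2 * q * ((q : ℝ) - 1) + ∫ s, phiIntegrand q s ∂ν := rfl

lemma Psi_eq (c₀ c₁ : ℝ) (ν : Measure (ℕ → ℝ)) (q : ℝ) :
    Psi c₀ c₁ ν q = c₀ * q + c₁ / 2 * q ^ 2 + ∫ s, psiIntegrand q s ∂ν := rfl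

namespace MemPm

variable {s : ℕ → ℝ} (hs : MemPm s)
include hs

lemma nonneg (i : ℕ) : 0 ≤ s i := hs.1 i

lemma le_one (i : ℕ) : s i ≤ 1 := (hs.2.2.1.le_tsum i fun j _ => hs.1 j).trans hs.2.2.2

lemma summable_sq_succ : Summable fun i => s (i + 1) ^ 2 :=
  ((summable_nat_add_iff 1).2 hs.2.2.1).of_nonneg_of_le (fun _ => sq_nonneg _)
    fun _ => sq_le (hs.nonneg _) (hs.le_one _)

lemma summable_psiKernel {q : ℝ} (hq : 0 ≤ q) : Summable fun i => psiKernel (q * s (i + 1)) :=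
  (hs.summable_sq_succ.mul_left (q ^ 2)).of_nonneg_of_le (fun _ => psiKernel_nonneg _) fun _ =>
    (psiKernel_le_sq (mul_nonneg hq (hs.nonneg _))).trans_eq (mul_pow _ _ _)

lemma summable_phiKernel (q : ℕ) : Summable fun i => phiKernel q (s (i + 1)) :=
  (hs.summable_psiKernel (Nat.cast_nonneg q)).of_nonneg_of_le
    (fun _ => phiKernel_nonneg q (hs.le_one _)) fun _ => phiKernel_le_psiKernel q (hs.le_one _)

lemma phiIntegrand_nonneg (q : ℕ) : 0 ≤ phiIntegrand q s :=
  add_nonneg (mul_nonneg q.cast_nonneg (hs.nonneg 0))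
    (tsum_nonneg fun _ => phiKernel_nonneg q (hs.le_one _))

lemma psiIntegrand_nonneg {q : ℝ} (hq : 0 ≤ q) : 0 ≤ psiIntegrand q s :=
  add_nonneg (mul_nonneg hq (hs.nonneg 0)) (tsum_nonneg fun _ => psiKernel_nonneg _)

lemma phiIntegrand_le_psiIntegrand (q : ℕ) : phiIntegrand q s ≤ psiIntegrand q s :=
  add_le_add_right ((hs.summable_phiKernel q).tsum_le_tsum
    (fun _ => phiKernel_le_psiKernel q (hs.le_one _)) (hs.summable_psiKernel q.cast_nonneg)) _

lemma psiIntegrand_le_two_mul_phiIntegrand {q : ℕ} (hq : 2 ≤ q) :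
    psiIntegrand q s ≤ 2 * phiIntegrand q s := by
  have hsum : ∑' i, psiKernel (q * s (i + 1)) ≤ 2 * ∑' i, phiKernel q (s (i + 1)) := by
    rw [← tsum_mul_left]
    exact (hs.summable_psiKernel q.cast_nonneg).tsum_le_tsum
      (fun _ => psiKernel_le_two_mul_phiKernel hq (hs.nonneg _) (hs.le_one _))
      ((hs.summable_phiKernel q).mul_left 2)
  have h0 : 0 ≤ (q : ℝ) * s 0 := mul_nonneg q.cast_nonneg (hs.nonneg 0)
  unfold psiIntegrand phiIntegrand
  linarith

lemma psiIntegrand_le {q : ℝ} (hq : 1 ≤ q) :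
    psiIntegrand q s ≤ q ^ 2 * (s 0 + ∑' i, s (i + 1) ^ 2) := by
  have hsum : ∑' i, psiKernel (q * s (i + 1)) ≤ q ^ 2 * ∑' i, s (i + 1) ^ 2 := by
    rw [← tsum_mul_left]
    exact (hs.summable_psiKernel (by linarith)).tsum_le_tsum
      (fun _ => (psiKernel_le_sq (mul_nonneg (by linarith) (hs.nonneg _))).trans_eq (mul_pow _ _ _))
      (hs.summable_sq_succ.mul_left _)
  have h0 : q * s 0 ≤ q ^ 2 * s 0 := mul_le_mul_of_nonneg_right (by nlinarith) (hs.nonneg 0)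
  unfold psiIntegrand
  linarith

end MemPm

section Integrability

variable {ν : Measure (ℕ → ℝ)} (hν : ∀ᵐ s ∂ν, MemPm s)
  (hint : ∫⁻ s, ENNReal.ofReal (s 0 + ∑' i : ℕ, (s (i + 1)) ^ 2) ∂ν ≠ ⊤)
include hν

lemma aestronglyMeasurable_psiIntegrand {q : ℝ} (hq : 0 ≤ q) :
    AEStronglyMeasurable (psiIntegrand q) ν := by
  refine ((measurable_pi_apply 0).const_mul _).aestronglyMeasurable.add
    (aestronglyMeasurable_tsum (fun _ => ?_) (hν.mono fun _ hs => hs.summable_psiKernel hq))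
  unfold psiKernel; fun_prop

include hint in
lemma integrable_psiIntegrand {q : ℝ} (hq : 1 ≤ q) : Integrable (psiIntegrand q) ν := by
  have hfin : HasFiniteIntegral (fun s : ℕ → ℝ => s 0 + ∑' i, s (i + 1) ^ 2) ν :=
    (hasFiniteIntegral_iff_ofReal (hν.mono fun s hs =>
      add_nonneg (hs.nonneg 0) (tsum_nonneg fun _ => sq_nonneg _))).2 hint.lt_top
  refine ⟨aestronglyMeasurable_psiIntegrand hν (by linarith), (hfin.const_mul (q ^ 2)).mono' ?_⟩
  filter_upwards [hν] with s hs
  rw [Real.norm_of_nonneg (hs.psiIntegrand_nonneg (by linarith))]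
  exact hs.psiIntegrand_le hq

lemma aestronglyMeasurable_phiIntegrand (q : ℕ) : AEStronglyMeasurable (phiIntegrand q) ν := by
  refine ((measurable_pi_apply 0).const_mul _).aestronglyMeasurable.add
    (aestronglyMeasurable_tsum (fun _ => ?_) (hν.mono fun _ hs => hs.summable_phiKernel q))
  unfold phiKernel; fun_prop

include hint in
lemma integrable_phiIntegrand {q : ℕ} (hq : 1 ≤ q) : Integrable (phiIntegrand q) ν := by
  refine (integrable_psiIntegrand hν hint (Nat.one_le_cast.2 hq)).mono'
    (aestronglyMeasurable_phiIntegrand hν q) ?_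
  filter_upwards [hν] with s hs
  rw [Real.norm_of_nonneg (hs.phiIntegrand_nonneg q)]
  exact hs.phiIntegrand_le_psiIntegrand q

end Integrability

/-- Let `c₀, c₁ ≥ 0` and let `ν` be a measure carried on `P_m` with
`∫ (s₀ + Σ_{i≥1} s_i²) ν(ds) < ∞`.  There exist constants `C > 0` and `C′ > 0` such
that for every integer `q ≥ 2`: `C Ψ(q) ≤ Φ(q) ≤ C′ Ψ(q)`. -/
theorem Phi_Psi_comparison
    (c₀ c₁ : ℝ) (hc₀ : 0 ≤ c₀) (hc₁ : 0 ≤ c₁)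
    (ν : Measure (ℕ → ℝ)) (hν : ν {s | ¬ MemPm s} = 0)
    (hint : ∫⁻ s, ENNReal.ofReal (s 0 + ∑' i : ℕ, (s (i + 1)) ^ 2) ∂ν ≠ ⊤) :
    ∃ C > (0 : ℝ), ∃ C' > (0 : ℝ), ∀ q : ℕ, 2 ≤ q →
      C * Psi c₀ c₁ ν q ≤ Phi c₀ c₁ ν q ∧ Phi c₀ c₁ ν q ≤ C' * Psi c₀ c₁ ν q := by
  have hPm : ∀ᵐ s ∂ν, MemPm s := ae_iff.2 hν
  refine ⟨1 / 2, by norm_num, 1, one_pos, fun q hq => ?_⟩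
  have hq' : (2 : ℝ) ≤ q := Nat.ofNat_le_cast.2 hq
  have hφ := integrable_phiIntegrand hPm hint (q := q) (by omega)
  have hψ := integrable_psiIntegrand hPm hint (q := q) (by linarith)
  have h₀ : 0 ≤ ∫ s, phiIntegrand q s ∂ν :=
    integral_nonneg_of_ae (hPm.mono fun s hs => hs.phiIntegrand_nonneg q)
  have h₁ : ∫ s, phiIntegrand q s ∂ν ≤ ∫ s, psiIntegrand q s ∂ν :=
    integral_mono_ae hφ hψ (hPm.mono fun s hs => hs.phiIntegrand_le_psiIntegrand q)
  have h₂ : ∫ s, psiIntegrand q s ∂ν ≤ 2 * ∫ s, phiIntegrand q s ∂ν := by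
    rw [← integral_const_mul]
    exact integral_mono_ae hψ (hφ.const_mul 2)
      (hPm.mono fun s hs => hs.psiIntegrand_le_two_mul_phiIntegrand hq)
  rw [Phi_eq, Psi_eq]
  constructor
  · nlinarith [mul_nonneg hc₀ (by linarith : (0 : ℝ) ≤ q),
      mul_nonneg hc₁ (mul_nonneg (by linarith : (0 : ℝ) ≤ q) (by linarith : (0 : ℝ) ≤ q - 2))]
  · nlinarith [mul_nonneg hc₁ (by linarith : (0 : ℝ) ≤ q)]
end
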